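/- arXiv:2103.02919 — 9 statements merged into one kernel-verified Lean document; each statement's English description precedes it below -/
import Mathlib

section
/- Let X, Y, P, Z be lists over an alphabet and let c be a character. Suppose X = X' ++ [c], Y = Y' ++ [c], P = P' ++ [c], and Z is a constrained longest common subsequence of X and Y with respect to P. Then Z ends in c, i.e. Z = Z' ++ [c] for some list Z', and Z' is a constrained longest common subsequence of X' and Y' with respect to P'. -/
/-- `Z` is a constrained common subsequence of `X` and `Y` with respect to `P`:
`Z` is a sublist (subsequence) of both `X` and `Y`, and `P` is a sublist of `Z`. -/
def CCS {α : Type*} (X Y P Z : List α) : Prop :=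
  Z.Sublist X ∧ Z.Sublist Y ∧ P.Sublist Z

/-- `Z` is a constrained longest common subsequence of `X` and `Y` with respect to `P`. -/
def CLCS {α : Type*} (X Y P Z : List α) : Prop :=
  CCS X Y P Z ∧ ∀ W : List α, CCS X Y P W → W.length ≤ Z.length

/-- The maximum length of a constrained common subsequence of `X` and `Y`
with respect to `P` (meaningful when some CCS exists). -/
noncomputable def clcsLen {α : Type*} (X Y P : List α) : ℕ :=
  sSup {n | ∃ Z : List α, CCS X Y P Z ∧ Z.length = n}

/-! A CLCS of `X' ++ [c]` and `Y' ++ [c]` must use the common final `c`: otherwise it is a common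
subsequence of `X'` and `Y'`, and appending `c` would give a longer one. Appending or removing a
final `c` on all four lists preserves the CCS property, so maximality transfers to `Z'`. -/

theorem List.Sublist.sublist_or_exists_eq_append_singleton {α : Type*} {l l' : List α} {c : α}
    (h : l.Sublist (l' ++ [c])) : l.Sublist l' ∨ ∃ l₀, l = l₀ ++ [c] := by
  obtain ⟨l₁, l₂, rfl, h₁, h₂⟩ := List.sublist_append_iff.mp h
  rcases List.sublist_singleton.mp h₂ with rfl | rfl
  · exact .inl (by simpa using h₁)
  · exact .inr ⟨l₁, rfl⟩

section

variable {α : Type*} {X Y P Z : List α} {c : α}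

theorem ccs_append_singleton_iff :
    CCS (X ++ [c]) (Y ++ [c]) (P ++ [c]) (Z ++ [c]) ↔ CCS X Y P Z := by
  simp only [CCS, List.append_sublist_append_right]

theorem CLCS.exists_eq_append_singleton (h : CLCS (X ++ [c]) (Y ++ [c]) P Z) :
    ∃ Z', Z = Z' ++ [c] := by
  obtain ⟨⟨hZX, hZY, hPZ⟩, hmax⟩ := h
  rcases hZX.sublist_or_exists_eq_append_singleton with hZX' | hend
  · rcases hZY.sublist_or_exists_eq_append_singleton with hZY' | hend
    · have hlonger : CCS (X ++ [c]) (Y ++ [c]) P (Z ++ [c]) :=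
        ⟨(List.append_sublist_append_right _).mpr hZX', (List.append_sublist_append_right _).mpr hZY',
          hPZ.trans (List.sublist_append_left Z [c])⟩
      simpa using hmax _ hlonger
    · exact hend
  · exact hend

end

theorem clcs_both_end_match {α : Type*} (X Y P Z X' Y' P' : List α) (c : α)
    (hX : X = X' ++ [c]) (hY : Y = Y' ++ [c]) (hP : P = P' ++ [c])
    (hZ : CLCS X Y P Z) :
    ∃ Z' : List α, Z = Z' ++ [c] ∧ CLCS X' Y' P' Z' := by
  subst hX hY hP
  obtain ⟨Z', rfl⟩ := hZ.exists_eq_append_singleton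
  refine ⟨Z', rfl, ccs_append_singleton_iff.mp hZ.1, fun W hW => ?_⟩
  simpa using hZ.2 _ (ccs_append_singleton_iff.mpr hW)
end

section
/- Let X, Y, P, Z be lists over an alphabet and let x, y be characters with x ≠ y. Suppose X = X' ++ [x], Z is a constrained longest common subsequence of X and Y with respect to P, and Z does not end in x (i.e. Z is empty or Z = Z'' ++ [z] with z ≠ x). Then Z is a constrained longest common subsequence of X' and Y with respect to P. -/
theorem List.Sublist.of_sublist_concat {α : Type*} {l l' : List α} {a : α}
    (h : l.Sublist (l' ++ [a])) (ha : l.getLast? ≠ some a) : l.Sublist l' := by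
  obtain ⟨l₁, l₂, rfl, h₁, h₂⟩ := List.sublist_append_iff.mp h
  rcases List.sublist_singleton.mp h₂ with rfl | rfl
  · simpa using h₁
  · simp at ha

theorem CCS.mono_left {α : Type*} {X X' Y P W : List α} (hX : X'.Sublist X)
    (hW : CCS X' Y P W) : CCS X Y P W :=
  ⟨hW.1.trans hX, hW.2⟩

theorem CLCS.of_sublist_left {α : Type*} {X X' Y P Z : List α} (hX : X'.Sublist X)
    (hZ : CLCS X Y P Z) (hZX' : Z.Sublist X') : CLCS X' Y P Z :=
  ⟨⟨hZX', hZ.1.2⟩, fun W hW => hZ.2 W (hW.mono_left hX)⟩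

theorem clcs_drop_last_left_general {α : Type*} (X Y P Z X' : List α) (x : α)
    (hX : X = X' ++ [x])
    (hZ : CLCS X Y P Z)
    (hlast : Z = [] ∨ ∃ (Z'' : List α) (z : α), Z = Z'' ++ [z] ∧ z ≠ x) :
    CLCS X' Y P Z := by
  subst hX
  have hZx : Z.getLast? ≠ some x := by
    rcases hlast with rfl | ⟨Z'', z, rfl, hz⟩ <;> simp [*]
  exact hZ.of_sublist_left (List.sublist_append_left X' [x]) (hZ.1.1.of_sublist_concat hZx)

theorem clcs_drop_last_left {α : Type*} (X Y P Z X' : List α) (x y : α)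
    (hxy : x ≠ y) (hX : X = X' ++ [x])
    (hZ : CLCS X Y P Z)
    (hlast : Z = [] ∨ ∃ (Z'' : List α) (z : α), Z = Z'' ++ [z] ∧ z ≠ x) :
    CLCS X' Y P Z :=
  clcs_drop_last_left_general X Y P Z X' x hX hZ hlast
end

section
/- Let X, Y, P, Z be lists over an alphabet and let x, y be characters with x ≠ y. Suppose Y = Y' ++ [y], Z is a constrained longest common subsequence of X and Y with respect to P, and Z does not end in y (i.e. Z is empty or Z = Z'' ++ [z] with z ≠ y). Then Z is a constrained longest common subsequence of X and Y' with respect to P. -/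
/-! Dropping the last letter `y` of `Y` only shrinks the set of constrained common subsequences,
so a longest one stays longest as long as it is still a subsequence of the shortened list; and a
subsequence of `Y' ++ [y]` that does not end in `y` is already a subsequence of `Y'`. -/

theorem List.Sublist.of_sublist_concat_s3 {α : Type*} {Z Y' : List α} {y : α}
    (h : Z.Sublist (Y' ++ [y])) (hZ : ∀ Z'', Z ≠ Z'' ++ [y]) : Z.Sublist Y' := by
  rw [← List.reverse_sublist, List.reverse_append, List.reverse_singleton, List.singleton_append,
    List.sublist_cons_iff] at h
  rcases h with h | ⟨r, hr, -⟩
  · exact List.reverse_sublist.mp h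
  · exact absurd (by simpa using congrArg List.reverse hr) (hZ r.reverse)

theorem CCS.mono_right {α : Type*} {X Y₁ Y₂ P W : List α} (hW : CCS X Y₁ P W)
    (hY : Y₁.Sublist Y₂) : CCS X Y₂ P W :=
  ⟨hW.1, hW.2.1.trans hY, hW.2.2⟩

theorem CLCS.of_sublist_right {α : Type*} {X Y₁ Y₂ P Z : List α} (hZ : CLCS X Y₂ P Z)
    (hZY : Z.Sublist Y₁) (hY : Y₁.Sublist Y₂) : CLCS X Y₁ P Z :=
  ⟨⟨hZ.1.1, hZY, hZ.1.2.2⟩, fun W hW => hZ.2 W (hW.mono_right hY)⟩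

theorem clcs_drop_last_right_general {α : Type*} (X Y P Z Y' : List α) (y : α)
    (hY : Y = Y' ++ [y])
    (hZ : CLCS X Y P Z)
    (hlast : Z = [] ∨ ∃ (Z'' : List α) (z : α), Z = Z'' ++ [z] ∧ z ≠ y) :
    CLCS X Y' P Z := by
  subst hY
  have hZ_not_ends_in_y : ∀ Z'', Z ≠ Z'' ++ [y] := by
    rintro Z'' rfl
    rcases hlast with h | ⟨Z₀, z, h, hz⟩
    · simp at h
    · exact hz (List.singleton_inj.mp (List.append_inj_right' h rfl)).symm
  exact hZ.of_sublist_right (hZ.1.2.1.of_sublist_concat_s3 hZ_not_ends_in_y)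
    (List.sublist_append_left _ _)

theorem clcs_drop_last_right {α : Type*} (X Y P Z Y' : List α) (x y : α)
    (hxy : x ≠ y) (hY : Y = Y' ++ [y])
    (hZ : CLCS X Y P Z)
    (hlast : Z = [] ∨ ∃ (Z'' : List α) (z : α), Z = Z'' ++ [z] ∧ z ≠ y) :
    CLCS X Y' P Z :=
  clcs_drop_last_right_general X Y P Z Y' y hY hZ hlast
end

section
/- Let X', Y', P' be lists over an alphabet and let c be a character. If P' is a subsequence of both X' and Y', then clcsLen (X' ++ [c]) (Y' ++ [c]) (P' ++ [c]) = 1 + clcsLen X' Y' P'. -/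
/-! Dropping the last element preserves the sublist relation, so removing the final entry of a
CCS for `X ++ [c]`, `Y ++ [c]`, `P ++ [c]` leaves a CCS for `X`, `Y`, `P`, one element shorter.
Conversely, appending `c` to a CCS for `X`, `Y`, `P` gives one for the extended lists. -/

theorem List.Sublist.dropLast {α : Type*} {l₁ l₂ : List α} (h : l₁.Sublist l₂) :
    l₁.dropLast.Sublist l₂.dropLast := by
  simpa using h.reverse.tail

theorem bddAbove_ccs_lengths {α : Type*} (X Y P : List α) :
    BddAbove {n | ∃ Z : List α, CCS X Y P Z ∧ Z.length = n} :=
  ⟨X.length, fun _ ⟨_, hZ, hn⟩ => hn ▸ hZ.1.length_le⟩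

namespace CCS

variable {α : Type*} {X Y P Z : List α}

theorem append {X' Y' P' Z' : List α} (h : CCS X Y P Z) (h' : CCS X' Y' P' Z') :
    CCS (X ++ X') (Y ++ Y') (P ++ P') (Z ++ Z') :=
  ⟨h.1.append h'.1, h.2.1.append h'.2.1, h.2.2.append h'.2.2⟩

theorem dropLast_of_append_singleton {c : α} (h : CCS (X ++ [c]) (Y ++ [c]) (P ++ [c]) Z) :
    CCS X Y P Z.dropLast :=
  ⟨by simpa using h.1.dropLast, by simpa using h.2.1.dropLast, by simpa using h.2.2.dropLast⟩

theorem length_le_clcsLen (h : CCS X Y P Z) : Z.length ≤ clcsLen X Y P :=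
  le_csSup (bddAbove_ccs_lengths X Y P) ⟨Z, h, rfl⟩

end CCS

theorem exists_ccs_length_eq_clcsLen {α : Type*} {X Y P : List α}
    (hX : P.Sublist X) (hY : P.Sublist Y) :
    ∃ Z, CCS X Y P Z ∧ Z.length = clcsLen X Y P := by
  refine Nat.sSup_mem ?_ (bddAbove_ccs_lengths X Y P)
  exact ⟨P.length, P, ⟨hX, hY, .refl P⟩, rfl⟩

theorem clcsLen_append_match_constraint {α : Type*} (X' Y' P' : List α) (c : α)
    (h1 : P'.Sublist X') (h2 : P'.Sublist Y') :
    clcsLen (X' ++ [c]) (Y' ++ [c]) (P' ++ [c]) = 1 + clcsLen X' Y' P' := by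
  apply le_antisymm
  · obtain ⟨W, hW, hWlen⟩ := exists_ccs_length_eq_clcsLen
      (h1.append (.refl [c])) (h2.append (.refl [c]))
    have := hW.dropLast_of_append_singleton.length_le_clcsLen
    rw [List.length_dropLast] at this
    omega
  · obtain ⟨Z, hZ, hZlen⟩ := exists_ccs_length_eq_clcsLen h1 h2
    have hc : CCS [c] [c] [c] [c] := ⟨.refl _, .refl _, .refl _⟩
    have := (hZ.append hc).length_le_clcsLen
    rw [List.length_append, List.length_singleton, hZlen] at this
    omega
end

section
/- Let X', Y', P be lists over an alphabet and let c be a character such that P does not end in c (i.e. P is empty or P = P'' ++ [p] with p ≠ c). If P is a subsequence of both X' ++ [c] and Y' ++ [c], then P is a subsequence of both X' and Y', and clcsLen (X' ++ [c]) (Y' ++ [c]) P = 1 + clcsLen X' Y' P. -/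
namespace List

variable {α : Type*} {l r : List α} {c : α}

theorem sublist_append_singleton_iff :
    l <+ r ++ [c] ↔ l <+ r ∨ ∃ t, l = t ++ [c] ∧ t <+ r := by
  constructor
  · intro h
    obtain ⟨l₁, l₂, rfl, h₁, h₂⟩ := sublist_append_iff.mp h
    rcases sublist_singleton.mp h₂ with rfl | rfl
    · exact Or.inl (by simpa using h₁)
    · exact Or.inr ⟨l₁, rfl, h₁⟩
  · rintro (h | ⟨t, rfl, h⟩)
    · exact h.trans (sublist_append_left r [c])
    · exact h.append (Sublist.refl [c])

theorem Sublist.of_append_singleton_of_getLast?_ne (h : l <+ r ++ [c])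
    (hl : l.getLast? ≠ some c) : l <+ r := by
  rcases sublist_append_singleton_iff.mp h with h | ⟨t, rfl, -⟩
  · exact h
  · simp at hl

theorem Sublist.dropLast_of_append_singleton (h : l <+ r ++ [c]) : l.dropLast <+ r := by
  rcases sublist_append_singleton_iff.mp h with h | ⟨t, rfl, ht⟩
  · exact (dropLast_sublist l).trans h
  · simpa using ht

end List

namespace CCS

variable {α : Type*} {X Y P Z : List α}

theorem append_singleton (h : CCS X Y P Z) (c : α) : CCS (X ++ [c]) (Y ++ [c]) P (Z ++ [c]) :=
  ⟨h.1.append (.refl [c]), h.2.1.append (.refl [c]), h.2.2.trans (Z.sublist_append_left [c])⟩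

theorem exists_of_append_singleton {c : α} (h : CCS (X ++ [c]) (Y ++ [c]) P Z)
    (hP : P.getLast? ≠ some c) : ∃ W, CCS X Y P W ∧ Z.length ≤ W.length + 1 := by
  obtain ⟨hZX, hZY, hPZ⟩ := h
  by_cases hZ : Z.getLast? = some c
  · obtain ⟨W, rfl⟩ := List.getLast?_eq_some_iff.mp hZ
    refine ⟨W, ⟨?_, ?_, hPZ.of_append_singleton_of_getLast?_ne hP⟩, by simp⟩
    · simpa using hZX.dropLast_of_append_singleton
    · simpa using hZY.dropLast_of_append_singleton
  · exact ⟨Z, ⟨hZX.of_append_singleton_of_getLast?_ne hZ,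
      hZY.of_append_singleton_of_getLast?_ne hZ, hPZ⟩, by omega⟩

theorem bddAbove_lengths (X Y P : List α) :
    BddAbove {n | ∃ Z : List α, CCS X Y P Z ∧ Z.length = n} :=
  ⟨X.length, by rintro _ ⟨Z, hZ, rfl⟩; exact hZ.1.length_le⟩

end CCS

theorem clcsLen_append_match_no_constraint {α : Type*} (X' Y' P : List α) (c : α)
    (hP : P = [] ∨ ∃ (P'' : List α) (p : α), P = P'' ++ [p] ∧ p ≠ c)
    (h1 : P.Sublist (X' ++ [c])) (h2 : P.Sublist (Y' ++ [c])) :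
    P.Sublist X' ∧ P.Sublist Y' ∧
    clcsLen (X' ++ [c]) (Y' ++ [c]) P = 1 + clcsLen X' Y' P := by
  have hlast : P.getLast? ≠ some c := by
    rcases hP with rfl | ⟨P'', p, rfl, hp⟩
    · simp
    · simpa using hp
  have hX := h1.of_append_singleton_of_getLast?_ne hlast
  have hY := h2.of_append_singleton_of_getLast?_ne hlast
  refine ⟨hX, hY, le_antisymm ?_ ?_⟩
  · obtain ⟨Z, hZ, hlen⟩ := exists_ccs_length_eq_clcsLen h1 h2
    obtain ⟨W, hW, hZW⟩ := hZ.exists_of_append_singleton hlast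
    have := hW.length_le_clcsLen
    omega
  · obtain ⟨Z, hZ, hlen⟩ := exists_ccs_length_eq_clcsLen hX hY
    have := (hZ.append_singleton c).length_le_clcsLen
    simp only [List.length_append, List.length_singleton] at this
    omega
end

section
/- Let (X', Y') be a constrained alignment of X and Y with respect to P, and let M be the list of matching-column characters of (X', Y'). Then P is a subsequence of M, M is a constrained common subsequence of X and Y with respect to P, and the alignment score of (X', Y') under the distance function δ (δ(a,b) = -1 if a = b and 0 otherwise) equals the negative of the length of M. -/
/-- `(X', Y')` is an alignment of `X` and `Y`: equal lengths, removing the spaces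
(`none` entries) gives back `X` resp. `Y`, and no column consists of two spaces. -/
def IsAlignment {σ : Type*} (X Y : List σ) (X' Y' : List (Option σ)) : Prop :=
  X'.length = Y'.length ∧
  X'.filterMap id = X ∧
  Y'.filterMap id = Y ∧
  ∀ p ∈ X'.zip Y', ¬(p.1 = none ∧ p.2 = none)

/-- The list of matching-column characters of an alignment. -/
def matchCols {σ : Type*} [DecidableEq σ] (X' Y' : List (Option σ)) : List σ :=
  (X'.zip Y').filterMap (fun p => if p.1 = p.2 then p.1 else none)

/-- `(X', Y')` is a constrained alignment of `X` and `Y` with respect to `P`. -/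
def IsConstrainedAlignment {σ : Type*} [DecidableEq σ] (X Y P : List σ)
    (X' Y' : List (Option σ)) : Prop :=
  IsAlignment X Y X' Y' ∧ P.Sublist (matchCols X' Y')

/-- The alignment score of `(X', Y')` under a distance function `δ`. -/
def score {σ : Type*} (δ : Option σ → Option σ → ℤ) (X' Y' : List (Option σ)) : ℤ :=
  ((X'.zip Y').map (fun p => δ p.1 p.2)).sum

/-- The distance function: `-1` on a match, `0` otherwise. -/
def delta {σ : Type*} [DecidableEq σ] (a b : Option σ) : ℤ :=
  if a = b then -1 else 0

/-! The score under `delta` and the length of the matching-column list both count the columns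
whose two entries are equal; the counts agree because no column consists of two gaps. Each
matched character is read off the `X'`-entry (equally the `Y'`-entry) of its column, so the
matching-column list is a subsequence of both `X` and `Y`. -/

section

open List

theorem List.filterMap_sublist_filterMap {α β : Type*} {f g : α → Option β}
    (h : ∀ a b, f a = some b → g a = some b) (l : List α) :
    l.filterMap f <+ l.filterMap g := by
  induction l with
  | nil => rfl
  | cons a l ih =>
    rw [filterMap_cons, filterMap_cons]
    cases hf : f a with
    | none => exact ih.trans (by split <;> simp)
    | some b => simpa [h a b hf] using ih

variable {σ : Type*} [DecidableEq σ]

theorem matchCols_comm (X' Y' : List (Option σ)) : matchCols X' Y' = matchCols Y' X' := by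
  rw [matchCols, matchCols, ← zip_swap, filterMap_map]
  refine filterMap_congr fun p _ => ?_
  by_cases hp : p.1 = p.2 <;> simp [hp, eq_comm]

theorem matchCols_sublist_filterMap_left {X' Y' : List (Option σ)}
    (hlen : X'.length ≤ Y'.length) : matchCols X' Y' <+ X'.filterMap id := by
  calc matchCols X' Y' <+ (X'.zip Y').filterMap Prod.fst :=
        filterMap_sublist_filterMap (fun p c => by split <;> simp_all) _
    _ = X'.filterMap id := by
        conv_rhs => rw [← map_fst_zip hlen, filterMap_map]
        rfl

theorem matchCols_sublist_filterMap_right {X' Y' : List (Option σ)}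
    (hlen : Y'.length ≤ X'.length) : matchCols X' Y' <+ Y'.filterMap id :=
  matchCols_comm X' Y' ▸ matchCols_sublist_filterMap_left hlen

theorem score_delta (X' Y' : List (Option σ)) :
    score delta X' Y' = -((X'.zip Y').countP fun p => p.1 = p.2) := by
  simp [score, delta, sum_map_ite, countP_eq_length_filter]

theorem length_matchCols {X' Y' : List (Option σ)}
    (hgap : ∀ p ∈ X'.zip Y', ¬(p.1 = none ∧ p.2 = none)) :
    (matchCols X' Y').length = (X'.zip Y').countP fun p => p.1 = p.2 := by
  rw [matchCols, length_filterMap_eq_countP]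
  refine countP_congr fun p hp => ?_
  have := hgap p hp
  obtain ⟨a, b⟩ := p
  cases a <;> cases b <;> simp_all

end

theorem constrained_alignment_matchCols {σ : Type*} [DecidableEq σ]
    (X Y P : List σ) (X' Y' : List (Option σ))
    (h : IsConstrainedAlignment X Y P X' Y') :
    P.Sublist (matchCols X' Y') ∧
    CCS X Y P (matchCols X' Y') ∧
    score delta X' Y' = -((matchCols X' Y').length : ℤ) := by
  obtain ⟨⟨hlen, rfl, rfl, hgap⟩, hP⟩ := h
  refine ⟨hP, ⟨matchCols_sublist_filterMap_left hlen.le,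
    matchCols_sublist_filterMap_right hlen.ge, hP⟩, ?_⟩
  rw [score_delta, length_matchCols hgap]
end

section
/- Let X, Y, P be lists over an alphabet Σ and let Z be a constrained common subsequence of X and Y with respect to P. Then there exists a constrained alignment (X', Y') of X and Y with respect to P whose alignment score under the distance function δ (δ(a,b) = -1 if a = b and 0 otherwise) is at most the negative of the length of Z. -/
section Alignment

variable {σ : Type*}

lemma filterMap_id_cons (a : Option σ) (A : List (Option σ)) :
    (a :: A).filterMap id = a.toList ++ A.filterMap id := by
  cases a <;> rfl

lemma IsAlignment.cons {X Y : List σ} {A B : List (Option σ)} {a b : Option σ}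
    (h : IsAlignment X Y A B) (hab : ¬(a = none ∧ b = none)) :
    IsAlignment (a.toList ++ X) (b.toList ++ Y) (a :: A) (b :: B) := by
  obtain ⟨hlen, hA, hB, hcols⟩ := h
  refine ⟨by simp [hlen], by rw [filterMap_id_cons, hA], by rw [filterMap_id_cons, hB], ?_⟩
  intro p hp
  rcases List.mem_cons.mp hp with rfl | hp
  exacts [hab, hcols p hp]

lemma isAlignment_nil_left (Y : List σ) :
    IsAlignment [] Y (Y.map fun _ => none) (Y.map some) := by
  induction Y with
  | nil => exact ⟨rfl, rfl, rfl, by simp⟩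
  | cons y Y ih => exact ih.cons (a := none) (b := some y) (by simp)

@[simp]
lemma score_cons (δ : Option σ → Option σ → ℤ) (a b : Option σ) (A B : List (Option σ)) :
    score δ (a :: A) (b :: B) = δ a b + score δ A B := by
  simp [score]

variable [DecidableEq σ]

@[simp]
lemma matchCols_cons (a b : Option σ) (A B : List (Option σ)) :
    matchCols (a :: A) (b :: B) = (if a = b then a.toList else []) ++ matchCols A B := by
  by_cases hab : a = b
  · subst hab; cases a <;> simp [matchCols]
  · simp [matchCols, hab]

/-- Only an inequality: a double-space column scores `-1` without contributing to `matchCols`. -/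
lemma score_delta_le_neg_length_matchCols (A B : List (Option σ)) :
    score delta A B ≤ -((matchCols A B).length : ℤ) := by
  induction A generalizing B with
  | nil => simp [score, matchCols]
  | cons a A ih =>
    cases B with
    | nil => simp [score, matchCols]
    | cons b B =>
      have hcol : delta a b ≤ -((if a = b then a.toList else []).length : ℤ) := by
        by_cases hab : a = b
        · subst hab; cases a <;> simp [delta]
        · simp [delta, hab]
      simp only [score_cons, matchCols_cons, List.length_append, Nat.cast_add]
      linarith [ih B]

/-- The common subsequence `Z` is laid out in matching columns; every other character of `X`
or `Y` is put against a space. -/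
lemma exists_isAlignment_sublist_matchCols {Z X Y : List σ} (hX : Z.Sublist X)
    (hY : Z.Sublist Y) :
    ∃ A B : List (Option σ), IsAlignment X Y A B ∧ Z.Sublist (matchCols A B) := by
  induction hX generalizing Y with
  | slnil => exact ⟨_, _, isAlignment_nil_left Y, List.nil_sublist _⟩
  | cons x _ ih =>
    obtain ⟨A, B, hAB, hZ⟩ := ih hY
    exact ⟨some x :: A, none :: B, hAB.cons (by simp), by simpa using hZ⟩
  | cons_cons c _ ih =>
    induction Y with
    | nil => simp at hY
    | cons y Y ihY =>
      cases hY with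
      | cons _ hY =>
        obtain ⟨A, B, hAB, hZ⟩ := ihY hY
        exact ⟨none :: A, some y :: B, hAB.cons (by simp), by simpa using hZ⟩
      | cons_cons _ hY =>
        obtain ⟨A, B, hAB, hZ⟩ := ih hY
        exact ⟨some c :: A, some c :: B, hAB.cons (by simp), by simpa using hZ⟩

end Alignment

theorem ccs_to_alignment {σ : Type*} [DecidableEq σ] (X Y P Z : List σ)
    (h : CCS X Y P Z) :
    ∃ X' Y' : List (Option σ), IsConstrainedAlignment X Y P X' Y' ∧
      score delta X' Y' ≤ -(Z.length : ℤ) := by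
  obtain ⟨hX, hY, hP⟩ := h
  obtain ⟨A, B, hAB, hZ⟩ := exists_isAlignment_sublist_matchCols hX hY
  refine ⟨A, B, ⟨hAB, hP.trans hZ⟩, ?_⟩
  have hlen : (Z.length : ℤ) ≤ (matchCols A B).length := by exact_mod_cast hZ.length_le
  linarith [score_delta_le_neg_length_matchCols A B]
end

section
/- Let X, Y, P be lists over an alphabet with X = A ++ B, and let Z be a constrained common subsequence of X and Y with respect to P. Then there exist decompositions Y = C ++ D, P = Q ++ R, and Z = Z₁ ++ Z₂ such that Z₁ is a constrained common subsequence of A and C with respect to Q, and Z₂ is a constrained common subsequence of B and D with respect to R. -/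
theorem ccs_split {α : Type*} (X Y P Z A B : List α)
    (hX : X = A ++ B) (hZ : CCS X Y P Z) :
    ∃ C D Q R Z₁ Z₂ : List α,
      Y = C ++ D ∧ P = Q ++ R ∧ Z = Z₁ ++ Z₂ ∧
      CCS A C Q Z₁ ∧ CCS B D R Z₂ := by
  subst hX
  obtain ⟨hZX, hZY, hPZ⟩ := hZ
  obtain ⟨Z₁, Z₂, rfl, hA, hB⟩ := List.sublist_append_iff.mp hZX
  obtain ⟨C, D, rfl, hC, hD⟩ := List.append_sublist_iff.mp hZY
  obtain ⟨Q, R, rfl, hQ, hR⟩ := List.sublist_append_iff.mp hPZ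
  exact ⟨C, D, Q, R, Z₁, Z₂, rfl, rfl, rfl, ⟨hA, hC, hQ⟩, hB, hD, hR⟩
end

section
/- Let X, Y be lists over an alphabet and let c be a character. If X = X' ++ [c] and Y = Y' ++ [c], then every constrained longest common subsequence Z of X and Y with respect to any constraint list P is nonempty and its last element is c. -/
theorem List.Sublist.getLast?_eq_or_sublist {α : Type*} {l L : List α} {c : α}
    (h : l.Sublist (L ++ [c])) : l.getLast? = some c ∨ l.Sublist L := by
  obtain ⟨l₁, l₂, rfl, h₁, h₂⟩ := List.sublist_append_iff.mp h
  rcases List.sublist_singleton.mp h₂ with rfl | rfl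
  · exact Or.inr (by simpa using h₁)
  · exact Or.inl (by simp)

theorem CCS.append_singleton_s18 {α : Type*} {X Y P Z : List α} (h : CCS X Y P Z) (c : α) :
    CCS (X ++ [c]) (Y ++ [c]) P (Z ++ [c]) :=
  ⟨h.1.append (.refl _), h.2.1.append (.refl _), h.2.2.trans (List.sublist_append_left _ _)⟩

theorem clcs_last_eq_of_ends_match {α : Type*} (X Y X' Y' : List α) (c : α)
    (hX : X = X' ++ [c]) (hY : Y = Y' ++ [c]) :
    ∀ (P Z : List α), CLCS X Y P Z → Z ≠ [] ∧ Z.getLast? = some c := by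
  subst hX hY
  rintro P Z ⟨hZ, hmax⟩
  suffices hlast : Z.getLast? = some c from ⟨fun h ↦ by simp [h] at hlast, hlast⟩
  by_contra hne
  have hZX : Z.Sublist X' := hZ.1.getLast?_eq_or_sublist.resolve_left hne
  have hZY : Z.Sublist Y' := hZ.2.1.getLast?_eq_or_sublist.resolve_left hne
  have := hmax _ (CCS.append_singleton_s18 ⟨hZX, hZY, hZ.2.2⟩ c)
  simp at this
end
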